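/- arXiv:2004.05788 — 5 statements merged into one kernel-verified Lean document; each statement's English description precedes it below -/
import Mathlib

section
/- Fix b ≥ 0, ρ > 0 and u ∈ ℂ with u ≠ 0. Then the proximal map of the function z ↦ ½(|z| − b)² with parameter 1/ρ, i.e. the unique minimizer over z ∈ ℂ of ½(|z| − b)² + (ρ/2)|z − u|², is given by z* = ((b + ρ|u|)/(ρ + 1)) · (u/|u|). -/
/-!
Write `r = ‖u‖` and `c = (b + ρ r) / (ρ + 1)`. Expanding `‖z - u‖²` gives
`½(‖z‖ - b)² + (ρ/2)‖z - u‖² = m + ((ρ + 1)/2)(‖z‖ - c)² + ρ(‖z‖ r - ⟪z, u⟫)`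
with `m` independent of `z`. Both correction terms are nonnegative (Cauchy–Schwarz), and they
vanish together exactly when `‖z‖ = c` and `z` is a nonnegative multiple of `u`, i.e. at
`z = (c / r) u`.
-/

open RealInnerProductSpace

section
variable {E : Type*} [NormedAddCommGroup E] [InnerProductSpace ℝ E]

noncomputable def amplitudeProxObjective (b ρ : ℝ) (u z : E) : ℝ :=
  1 / 2 * (‖z‖ - b) ^ 2 + ρ / 2 * ‖z - u‖ ^ 2

noncomputable def amplitudeProxRadius (b ρ r : ℝ) : ℝ :=
  (b + ρ * r) / (ρ + 1)

noncomputable def amplitudeProx (b ρ : ℝ) (u : E) : E :=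
  (amplitudeProxRadius b ρ ‖u‖ / ‖u‖) • u

theorem amplitudeProxObjective_eq (b ρ : ℝ) (hρ : ρ + 1 ≠ 0) (u z : E) :
    amplitudeProxObjective b ρ u z =
      1 / 2 * (amplitudeProxRadius b ρ ‖u‖ - b) ^ 2
        + ρ / 2 * (amplitudeProxRadius b ρ ‖u‖ - ‖u‖) ^ 2
        + (ρ + 1) / 2 * (‖z‖ - amplitudeProxRadius b ρ ‖u‖) ^ 2
        + ρ * (‖z‖ * ‖u‖ - ⟪z, u⟫) := by
  rw [amplitudeProxObjective, norm_sub_sq_real, amplitudeProxRadius]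
  field_simp
  ring

theorem amplitudeProxRadius_nonneg {b ρ r : ℝ} (hb : 0 ≤ b) (hρ : 0 ≤ ρ) (hr : 0 ≤ r) :
    0 ≤ amplitudeProxRadius b ρ r := by
  unfold amplitudeProxRadius
  positivity

theorem norm_amplitudeProx {b ρ : ℝ} (hb : 0 ≤ b) (hρ : 0 ≤ ρ) {u : E} (hu : u ≠ 0) :
    ‖amplitudeProx b ρ u‖ = amplitudeProxRadius b ρ ‖u‖ := by
  have hc := amplitudeProxRadius_nonneg hb hρ (norm_nonneg u)
  rw [amplitudeProx, norm_smul_of_nonneg (by positivity), div_mul_cancel₀ _ (norm_ne_zero_iff.2 hu)]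

theorem inner_amplitudeProx_self (b ρ : ℝ) {u : E} (hu : u ≠ 0) :
    ⟪amplitudeProx b ρ u, u⟫ = amplitudeProxRadius b ρ ‖u‖ * ‖u‖ := by
  have hu' : ‖u‖ ≠ 0 := norm_ne_zero_iff.2 hu
  rw [amplitudeProx, real_inner_smul_left, real_inner_self_eq_norm_sq]
  field_simp

theorem amplitudeProxObjective_amplitudeProx_lt {b ρ : ℝ} (hb : 0 ≤ b) (hρ : 0 < ρ)
    {u : E} (hu : u ≠ 0) {z : E} (hz : z ≠ amplitudeProx b ρ u) :
    amplitudeProxObjective b ρ u (amplitudeProx b ρ u) < amplitudeProxObjective b ρ u z := by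
  set c := amplitudeProxRadius b ρ ‖u‖
  have hρ1 : ρ + 1 ≠ 0 := by positivity
  rw [amplitudeProxObjective_eq b ρ hρ1, amplitudeProxObjective_eq b ρ hρ1,
    norm_amplitudeProx hb hρ.le hu, inner_amplitudeProx_self b ρ hu]
  have h_inner : ⟪z, u⟫ ≤ ‖z‖ * ‖u‖ := real_inner_le_norm z u
  suffices h : 0 < (ρ + 1) / 2 * (‖z‖ - c) ^ 2 + ρ * (‖z‖ * ‖u‖ - ⟪z, u⟫) by
    nlinarith
  by_contra! h
  have h_norm : ‖z‖ = c := by nlinarith [sq_nonneg (‖z‖ - c)]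
  have h_ray : ‖u‖ • z = ‖z‖ • u := inner_eq_norm_mul_iff_real.1 (by nlinarith [sq_nonneg (‖z‖ - c)])
  apply hz
  change z = (c / ‖u‖) • u
  rw [← h_norm, div_eq_inv_mul, mul_smul, ← h_ray, inv_smul_smul₀ (norm_ne_zero_iff.2 hu)]

end

theorem stmt3 (b ρ : ℝ) (hb : 0 ≤ b) (hρ : 0 < ρ) (u : ℂ) (hu : u ≠ 0)
    (zstar : ℂ)
    (hz : zstar = (((b + ρ * ‖u‖) / (ρ + 1) : ℝ) : ℂ) * (u / ((‖u‖ : ℝ) : ℂ))) :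
    ∀ z : ℂ, z ≠ zstar →
      (1 / 2) * (‖zstar‖ - b) ^ 2 + (ρ / 2) * (‖zstar - u‖) ^ 2
        < (1 / 2) * (‖z‖ - b) ^ 2 + (ρ / 2) * (‖z - u‖) ^ 2 := by
  have hzstar : zstar = amplitudeProx b ρ u := by
    rw [hz, amplitudeProx, amplitudeProxRadius, Complex.real_smul]
    push_cast
    ring
  subst hzstar
  exact fun z hne => amplitudeProxObjective_amplitudeProx_lt hb hρ hu hne
end

section
/- Let H be a complex inner product space, P_X : H → H a linear idempotent map (P_X² = P_X), P_X^⊥ = id − P_X, R_X = 2P_X − id, and let P_Y : H → H be an arbitrary map with R_Y = 2P_Y − id. Fix β ∈ (1/2, 1). Suppose u ∈ H is a fixed point of the RAAR map, i.e. u = β(½ u + ½ R_X(R_Y u)) + (1−β) P_Y u. Then P_X u = P_X(P_Y u) and (1−β) P_X^⊥ u = (1−2β) P_X^⊥(P_Y u); equivalently P_Y u = P_X u − ((1−β)/(2β−1)) P_X^⊥ u. -/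
/-!
Expanding the two reflections, a fixed point `u` of the RAAR map satisfies
`(1 - β) u = β P (2 Q u - u) + (1 - 2β) Q u`. Applying the idempotent `P` leaves
`P u = P (Q u)`, and subtracting this from the equation gives the relation between the
components in `ker P`; solving it for `Q u` only needs `2β ≠ 1`.
-/

open Function

namespace RAAR

variable {𝕜 M : Type*} [Field 𝕜] [AddCommGroup M] [Module 𝕜 M]

variable (𝕜) in
def reflection (f : M → M) (v : M) : M := (2 : 𝕜) • f v - v

def raar (P Q : M → M) (β : 𝕜) (u : M) : M :=
  β • ((1 / 2 : 𝕜) • u + (1 / 2 : 𝕜) • reflection 𝕜 P (reflection 𝕜 Q u))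
    + (1 - β) • Q u

variable [NeZero (2 : 𝕜)]

theorem smul_eq_of_isFixedPt_raar {P Q : M → M} {β : 𝕜} {u : M}
    (hu : IsFixedPt (raar P Q β) u) :
    (1 - β) • u = β • P (reflection 𝕜 Q u) + (1 - 2 * β) • Q u := by
  unfold IsFixedPt raar reflection at hu
  unfold reflection
  linear_combination (norm := match_scalars <;> field_simp <;> ring) hu.symm

variable {P : M →ₗ[𝕜] M} {Q : M → M} {β : 𝕜} {u : M}

theorem map_eq_map_of_isFixedPt_raar (hP : IsIdempotentElem P)
    (hu : IsFixedPt (raar P Q β) u) : P u = P (Q u) := by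
  have hPP (v : M) : P (P v) = P v := LinearMap.congr_fun hP v
  have h := congrArg P (smul_eq_of_isFixedPt_raar hu)
  simp only [reflection, map_add, map_sub, map_smul, hPP] at h
  linear_combination (norm := module) h

theorem smul_sub_map_eq_of_isFixedPt_raar (hP : IsIdempotentElem P)
    (hu : IsFixedPt (raar P Q β) u) :
    (1 - β) • (u - P u) = (1 - 2 * β) • (Q u - P (Q u)) := by
  have h := smul_eq_of_isFixedPt_raar hu
  have hPu := map_eq_map_of_isFixedPt_raar hP hu
  simp only [reflection, map_sub, map_smul] at h
  linear_combination (norm := module) h - hPu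

theorem eq_of_isFixedPt_raar (hP : IsIdempotentElem P)
    (hu : IsFixedPt (raar P Q β) u) (hβ : 2 * β - 1 ≠ 0) :
    Q u = P u - ((1 - β) / (2 * β - 1)) • (u - P u) := by
  have h := smul_sub_map_eq_of_isFixedPt_raar hP hu
  rw [← map_eq_map_of_isFixedPt_raar hP hu] at h
  linear_combination (norm := match_scalars <;> field_simp <;> ring) (2 * β - 1)⁻¹ • h

end RAAR

open RAAR in
theorem stmt7_general (H : Type*) [NormedAddCommGroup H] [InnerProductSpace ℂ H]
    (PX : H →ₗ[ℂ] H) (hPX : ∀ v, PX (PX v) = PX v)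
    (PY : H → H) (β : ℝ) (hβ1 : 1 / 2 < β)
    (u : H)
    (hu : u = ((β : ℝ) : ℂ) • ((1 / 2 : ℂ) • u +
        (1 / 2 : ℂ) • ((2 : ℂ) • PX ((2 : ℂ) • PY u - u) - ((2 : ℂ) • PY u - u)))
      + (((1 - β : ℝ)) : ℂ) • PY u) :
    PX u = PX (PY u) ∧
    (((1 - β : ℝ) : ℂ)) • (u - PX u) = (((1 - 2 * β : ℝ) : ℂ)) • (PY u - PX (PY u)) ∧
    PY u = PX u - ((((1 - β) / (2 * β - 1) : ℝ)) : ℂ) • (u - PX u) := by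
  have hfix : IsFixedPt (raar PX PY (β : ℂ)) u := by
    push_cast at hu
    exact hu.symm
  have hidem : IsIdempotentElem PX := LinearMap.ext hPX
  have hβ : 2 * (β : ℂ) - 1 ≠ 0 := by exact_mod_cast (by linarith : 2 * β - 1 ≠ 0)
  push_cast
  exact ⟨map_eq_map_of_isFixedPt_raar hidem hfix, smul_sub_map_eq_of_isFixedPt_raar hidem hfix,
    eq_of_isFixedPt_raar hidem hfix hβ⟩

theorem stmt7 (H : Type*) [NormedAddCommGroup H] [InnerProductSpace ℂ H]
    (PX : H →ₗ[ℂ] H) (hPX : ∀ v, PX (PX v) = PX v)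
    (PY : H → H) (β : ℝ) (hβ1 : 1 / 2 < β) (hβ2 : β < 1)
    (u : H)
    (hu : u = ((β : ℝ) : ℂ) • ((1 / 2 : ℂ) • u +
        (1 / 2 : ℂ) • ((2 : ℂ) • PX ((2 : ℂ) • PY u - u) - ((2 : ℂ) • PY u - u)))
      + (((1 - β : ℝ)) : ℂ) • PY u) :
    PX u = PX (PY u) ∧
    (((1 - β : ℝ) : ℂ)) • (u - PX u) = (((1 - 2 * β : ℝ) : ℂ)) • (PY u - PX (PY u)) ∧
    PY u = PX u - ((((1 - β) / (2 * β - 1) : ℝ)) : ℂ) • (u - PX u) :=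
  stmt7_general H PX hPX PY β hβ1 u hu
end

section
/- Let H be a complex Hilbert space, P_X an orthogonal projection on H, P_X^⊥ = I − P_X, and P_Y : H → H any map satisfying ‖P_Y v‖ ≤ c for all v (for some constant c ≥ 0). Fix β ∈ (1/2, 1) and suppose u satisfies P_X u = P_X P_Y u and (1−β) P_X^⊥ u = (1−2β) P_X^⊥ P_Y u. Then ‖u‖ ≤ max((2β−1)/(1−β), 1) · c. In particular, for β ∈ [1/2, 2/3], ‖u‖ ≤ c, while for β ∈ [2/3, 1), ‖u‖ ≤ ((2β−1)/(1−β)) c. -/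
/-!
Write `w = P_Y u` and `t = (2β - 1)/(1 - β)`. The first fixed-point equation says `P_X u = P_X w`,
and the second gives `‖u - P_X u‖ = t ‖w - P_X w‖`. Since `P_X` is an orthogonal projection, the
Pythagorean splitting `‖v‖² = ‖P_X v‖² + ‖v - P_X v‖²` then yields
`‖u‖² = ‖P_X w‖² + t² ‖w - P_X w‖² ≤ max(t, 1)² ‖w‖² ≤ max(t, 1)² c²`.
-/

section

variable {𝕜 E : Type*} [RCLike 𝕜] [NormedAddCommGroup E] [InnerProductSpace 𝕜 E]

theorem LinearMap.IsSymmetric.norm_sq_eq_norm_sq_apply_add_norm_sq_sub_apply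
    {P : E →ₗ[𝕜] E} (hP : P.IsSymmetric) (hidem : ∀ v, P (P v) = P v) (v : E) :
    ‖v‖ ^ 2 = ‖P v‖ ^ 2 + ‖v - P v‖ ^ 2 := by
  have horth : inner 𝕜 (P v) (v - P v) = 0 := by
    rw [inner_sub_right, hP v v, hP v (P v), hidem, sub_self]
  have := norm_add_sq_eq_norm_sq_add_norm_sq_of_inner_eq_zero _ _ horth
  rw [add_sub_cancel] at this
  simpa only [sq] using this

theorem LinearMap.IsSymmetric.norm_le_max_mul_norm_of_apply_eq
    {P : E →ₗ[𝕜] E} (hP : P.IsSymmetric) (hidem : ∀ v, P (P v) = P v) {u w : E} {t : ℝ}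
    (hproj : P u = P w) (hperp : ‖u - P u‖ = t * ‖w - P w‖) :
    ‖u‖ ≤ max t 1 * ‖w‖ := by
  have hM : 1 ≤ max t 1 := le_max_right t 1
  rw [← pow_le_pow_iff_left₀ (norm_nonneg u) (by positivity) two_ne_zero]
  have hperp_le : ‖u - P u‖ ≤ max t 1 * ‖w - P w‖ :=
    hperp ▸ mul_le_mul_of_nonneg_right (le_max_left t 1) (norm_nonneg _)
  calc ‖u‖ ^ 2 = ‖P w‖ ^ 2 + ‖u - P u‖ ^ 2 := by
        rw [hP.norm_sq_eq_norm_sq_apply_add_norm_sq_sub_apply hidem, hproj]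
    _ ≤ max t 1 ^ 2 * ‖P w‖ ^ 2 + (max t 1 * ‖w - P w‖) ^ 2 := by
        gcongr
        exact le_mul_of_one_le_left (sq_nonneg _) (one_le_pow₀ hM)
    _ = (max t 1 * ‖w‖) ^ 2 := by
        rw [mul_pow, mul_pow, hP.norm_sq_eq_norm_sq_apply_add_norm_sq_sub_apply hidem w]; ring

theorem norm_eq_abs_div_abs_mul_norm_of_smul_eq_smul {a b : ℝ} (ha : a ≠ 0) {x y : E}
    (h : (a : 𝕜) • x = (b : 𝕜) • y) : ‖x‖ = |b| / |a| * ‖y‖ := by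
  have := congrArg norm h
  rw [norm_smul, norm_smul, RCLike.norm_ofReal, RCLike.norm_ofReal] at this
  field_simp
  linarith

end

theorem stmt8_general (H : Type*) [NormedAddCommGroup H] [InnerProductSpace ℂ H]
    (PX : H →ₗ[ℂ] H)
    (hidem : ∀ v, PX (PX v) = PX v)
    (hsa : ∀ v w : H, (inner ℂ (PX v) w : ℂ) = inner ℂ v (PX w))
    (PY : H → H) (c : ℝ) (hPY : ∀ v, ‖PY v‖ ≤ c)
    (β : ℝ) (hβ1 : 1 / 2 < β) (hβ2 : β < 1) (u : H)
    (h1 : PX u = PX (PY u))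
    (h2 : (((1 - β : ℝ)) : ℂ) • (u - PX u) = (((1 - 2 * β : ℝ)) : ℂ) • (PY u - PX (PY u))) :
    ‖u‖ ≤ max ((2 * β - 1) / (1 - β)) 1 * c ∧
    (β ≤ 2 / 3 → ‖u‖ ≤ c) ∧
    (2 / 3 ≤ β → ‖u‖ ≤ (2 * β - 1) / (1 - β) * c) := by
  have hβ : 0 < 1 - β := by linarith
  have hperp : ‖u - PX u‖ = (2 * β - 1) / (1 - β) * ‖PY u - PX (PY u)‖ := by
    rw [norm_eq_abs_div_abs_mul_norm_of_smul_eq_smul (b := 1 - 2 * β) hβ.ne' h2, abs_of_pos hβ,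
      abs_of_neg (show 1 - 2 * β < 0 by linarith), neg_sub]
  have hbound : ‖u‖ ≤ max ((2 * β - 1) / (1 - β)) 1 * c :=
    (LinearMap.IsSymmetric.norm_le_max_mul_norm_of_apply_eq hsa hidem h1 hperp).trans
      (mul_le_mul_of_nonneg_left (hPY u) (zero_le_one.trans (le_max_right _ _)))
  refine ⟨hbound, fun hβ3 => ?_, fun hβ3 => ?_⟩
  · rwa [max_eq_right ((div_le_one hβ).2 (by linarith)), one_mul] at hbound
  · rwa [max_eq_left ((one_le_div hβ).2 (by linarith))] at hbound

theorem stmt8 (H : Type*) [NormedAddCommGroup H] [InnerProductSpace ℂ H]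
    (PX : H →ₗ[ℂ] H)
    (hidem : ∀ v, PX (PX v) = PX v)
    (hsa : ∀ v w : H, (inner ℂ (PX v) w : ℂ) = inner ℂ v (PX w))
    (PY : H → H) (c : ℝ) (hc : 0 ≤ c) (hPY : ∀ v, ‖PY v‖ ≤ c)
    (β : ℝ) (hβ1 : 1 / 2 < β) (hβ2 : β < 1) (u : H)
    (h1 : PX u = PX (PY u))
    (h2 : (((1 - β : ℝ)) : ℂ) • (u - PX u) = (((1 - 2 * β : ℝ)) : ℂ) • (PY u - PX (PY u))) :
    ‖u‖ ≤ max ((2 * β - 1) / (1 - β)) 1 * c ∧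
    (β ≤ 2 / 3 → ‖u‖ ≤ c) ∧
    (2 / 3 ≤ β → ‖u‖ ≤ (2 * β - 1) / (1 - β) * c) :=
  stmt8_general H PX hidem hsa PY c hPY β hβ1 hβ2 u h1 h2
end

section
/- Let A : ℂ^n → ℂ^N be a complex-linear isometry (A*A = I), let b ∈ ℝ^N have nonnegative entries, and define sgn(w) ∈ ℂ^N entrywise by sgn(w)_j = w_j/|w_j| if w_j ≠ 0 and sgn(w)_j = 1 otherwise. Suppose x ∈ ℂ^n is a fixed point of the alternating projections map, i.e. x = A*(b ⊙ sgn(Ax)), and suppose ‖Ax‖ = ‖b‖. Then |Ax| = b entrywise (i.e. |(Ax)_j| = b_j for every j). Moreover, for any fixed point x one always has ‖Ax‖ ≤ ‖b‖. -/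
/-!
Write `y = A x` and `z = b ⊙ sgn y`. Since `A` is an isometry and `x = A* z`,
`‖y‖² = ‖x‖² = ⟪x, A* z⟫ = ⟪y, z⟫ = ∑ⱼ bⱼ |yⱼ|`, i.e. the real vector `|y|` satisfies
`⟪|y|, b⟫ = ‖|y|‖²`. Then `‖|y| - b‖² = ‖b‖² - ‖|y|‖²`, which gives `‖y‖ ≤ ‖b‖`, with equality
exactly when `|y| = b`.
-/

/-- The sign of a complex number, with `sgn 0 = 1`. -/
noncomputable def csgn (w : ℂ) : ℂ := if w = 0 then 1 else w / (‖w‖ : ℂ)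

open RCLike

section Isometry
variable {𝕜 E F : Type*} [RCLike 𝕜] [NormedAddCommGroup E] [InnerProductSpace 𝕜 E]
  [CompleteSpace E] [NormedAddCommGroup F] [InnerProductSpace 𝕜 F] [CompleteSpace F]

theorem sq_norm_apply_eq_re_inner_of_eq_adjoint {A : E →L[𝕜] F} (hA : ∀ v, ‖A v‖ = ‖v‖)
    {x : E} {z : F} (hx : x = ContinuousLinearMap.adjoint A z) :
    ‖A x‖ ^ 2 = re (inner 𝕜 (A x) z) := by
  rw [hA, ← ContinuousLinearMap.adjoint_inner_right, ← hx, norm_sq_eq_re_inner (𝕜 := 𝕜)]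

end Isometry

section RealInner
variable {E : Type*} [NormedAddCommGroup E] [InnerProductSpace ℝ E] {u b : E}

theorem norm_sub_sq_eq_of_real_inner_eq_norm_sq (h : inner ℝ u b = ‖u‖ ^ 2) :
    ‖u - b‖ ^ 2 = ‖b‖ ^ 2 - ‖u‖ ^ 2 := by
  rw [norm_sub_sq_real, h]; ring

theorem norm_le_of_real_inner_eq_norm_sq (h : inner ℝ u b = ‖u‖ ^ 2) : ‖u‖ ≤ ‖b‖ := by
  have := norm_sub_sq_eq_of_real_inner_eq_norm_sq h
  nlinarith [sq_nonneg ‖u - b‖, norm_nonneg u, norm_nonneg b]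

theorem eq_of_real_inner_eq_norm_sq_of_norm_eq (h : inner ℝ u b = ‖u‖ ^ 2) (hn : ‖u‖ = ‖b‖) :
    u = b := by
  have := norm_sub_sq_eq_of_real_inner_eq_norm_sq h
  rw [hn, sub_self, sq_eq_zero_iff, norm_sub_eq_zero_iff] at this
  exact this

end RealInner

theorem inner_mul_csgn_self (r : ℝ) (w : ℂ) : inner ℂ w ((r : ℂ) * csgn w) = r * ‖w‖ := by
  rw [inner_apply', csgn]
  split_ifs with hw
  · simp [hw]
  · have : (‖w‖ : ℂ) ≠ 0 := by simpa using hw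
    field_simp
    rw [← Complex.conj_mul']
    ring

namespace EuclideanSpace
variable {ι : Type*} [Fintype ι]

noncomputable def modulus (y : EuclideanSpace ℂ ι) : EuclideanSpace ℝ ι :=
  WithLp.toLp 2 fun j => ‖y j‖

theorem norm_modulus (y : EuclideanSpace ℂ ι) : ‖modulus y‖ = ‖y‖ := by
  simp [norm_eq, modulus]

theorem re_inner_mul_csgn (y : EuclideanSpace ℂ ι) (b : EuclideanSpace ℝ ι) :
    re (inner ℂ y (WithLp.toLp 2 fun j => (b j : ℂ) * csgn (y j))) = inner ℝ (modulus y) b := by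
  simp only [PiLp.inner_apply, inner_mul_csgn_self, map_sum, modulus, real_inner_eq_re_inner]
  simp [mul_comm]

end EuclideanSpace

theorem stmt11_general (n N : ℕ)
    (A : EuclideanSpace ℂ (Fin n) →L[ℂ] EuclideanSpace ℂ (Fin N))
    (hA : ∀ z, ‖A z‖ = ‖z‖)
    (b : EuclideanSpace ℝ (Fin N))
    (x : EuclideanSpace ℂ (Fin n))
    (hfix : x = ContinuousLinearMap.adjoint A
      (WithLp.toLp 2 (fun j => (b j : ℂ) * csgn ((A x) j)) : EuclideanSpace ℂ (Fin N))) :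
    (‖A x‖ = ‖b‖ → ∀ j, ‖(A x) j‖ = b j) ∧ ‖A x‖ ≤ ‖b‖ := by
  set u := EuclideanSpace.modulus (A x)
  have hu : ‖u‖ = ‖A x‖ := EuclideanSpace.norm_modulus (A x)
  have hinner : inner ℝ u b = ‖u‖ ^ 2 := by
    rw [hu, sq_norm_apply_eq_re_inner_of_eq_adjoint hA hfix, EuclideanSpace.re_inner_mul_csgn]
  rw [← hu]
  exact ⟨fun hn j => congrArg (· j) (eq_of_real_inner_eq_norm_sq_of_norm_eq hinner hn),
    norm_le_of_real_inner_eq_norm_sq hinner⟩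

theorem stmt11 (n N : ℕ)
    (A : EuclideanSpace ℂ (Fin n) →L[ℂ] EuclideanSpace ℂ (Fin N))
    (hA : ∀ z, ‖A z‖ = ‖z‖)
    (b : EuclideanSpace ℝ (Fin N)) (hb : ∀ j, 0 ≤ b j)
    (x : EuclideanSpace ℂ (Fin n))
    (hfix : x = ContinuousLinearMap.adjoint A
      (WithLp.toLp 2 (fun j => (b j : ℂ) * csgn ((A x) j)) : EuclideanSpace ℂ (Fin N))) :
    (‖A x‖ = ‖b‖ → ∀ j, ‖(A x) j‖ = b j) ∧ ‖A x‖ ≤ ‖b‖ :=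
  stmt11_general n N A hA b x hfix
end

section
/- Let m be an even positive integer and f ∈ ℤ. Define the Fresnel mask μ : {1,…,m}² → ℂ by μ(k₁,k₂) = exp(iπ f (k₁² + k₂²)/m), its twin μ̌(k₁,k₂) = conj(μ(m+1−k₁, m+1−k₂)), and h = conj(μ̌) ⊙ μ, i.e. h(k₁,k₂) = μ(m+1−k₁, m+1−k₂) · μ(k₁,k₂). Then h satisfies the half-period symmetry h(k₁ + m/2, k₂) = σ · h(k₁,k₂) and h(k₁, k₂ + m/2) = σ · h(k₁,k₂) whenever both sides are defined, where σ = (−1)^{f(1 + m/2)}. Equivalently, writing h as a 2×2 block matrix (h₁ h₂; h₃ h₄) with blocks of size m/2, one has h₁ = h₄ = σ h₂ = σ h₃. -/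
open Complex

/-!
Both factors of `h` are Gaussian phases, so `h k₁ k₂ = exp (iπ f Q / m)` with
`Q = (m+1-k₁)² + k₁² + (m+1-k₂)² + k₂²`. Writing `m = 2s`, shifting `k₁` by `s` changes `Q` by
`m (2k₁ - s - 1)`, so the phase changes by `(-1)^(f (2k₁ - s - 1)) = (-1)^(f (1 + s))`.
The symmetry in the second index follows from the first since `μ a b = μ b a`.
-/

lemma exp_pi_mul_div_add_mul (f n t : ℤ) {m : ℕ} (hm : m ≠ 0) :
    exp (I * Real.pi * f * ((n + m * t : ℤ) : ℂ) / m) =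
      (-1 : ℂ) ^ (f * t) * exp (I * Real.pi * f * (n : ℂ) / m) := by
  have hmC : (m : ℂ) ≠ 0 := Nat.cast_ne_zero.mpr hm
  rw [← exp_pi_mul_I, ← exp_int_mul, ← exp_add]
  congr 1
  push_cast
  field_simp
  ring

lemma neg_one_zpow_mul_sub_two_mul (f a b : ℤ) :
    (-1 : ℂ) ^ (f * (a - 2 * b)) = (-1 : ℂ) ^ (f * a) := by
  have hev : Even (f * (2 * b)) := ⟨f * b, by ring⟩
  rw [mul_sub, zpow_sub₀ (by norm_num), hev.neg_one_zpow, div_one]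

lemma mul_exp_fresnel (f a b c d : ℤ) (m : ℕ) :
    exp (I * Real.pi * f * ((a ^ 2 + b ^ 2 : ℤ) : ℂ) / m) *
        exp (I * Real.pi * f * ((c ^ 2 + d ^ 2 : ℤ) : ℂ) / m) =
      exp (I * Real.pi * f * ((a ^ 2 + c ^ 2 + (b ^ 2 + d ^ 2) : ℤ) : ℂ) / m) := by
  rw [← exp_add]
  congr 1
  push_cast
  ring

lemma fresnel_twin_product_shift_fst (m : ℕ) (hm : Even m) (hm0 : m ≠ 0) (f : ℤ)
    (μ : ℤ → ℤ → ℂ)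
    (hμ : ∀ a b : ℤ, μ a b = exp (I * Real.pi * f * ((a ^ 2 + b ^ 2 : ℤ) : ℂ) / m))
    (h : ℤ → ℤ → ℂ) (hh : ∀ k₁ k₂ : ℤ, h k₁ k₂ = μ (m + 1 - k₁) (m + 1 - k₂) * μ k₁ k₂)
    (k₁ k₂ : ℤ) :
    h (k₁ + (m : ℤ) / 2) k₂ = (-1 : ℂ) ^ (f * (1 + (m : ℤ) / 2)) * h k₁ k₂ := by
  set s : ℤ := (m : ℤ) / 2
  have hms : (m : ℤ) = 2 * s := by
    obtain ⟨t, ht⟩ := hm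
    omega
  have hQ : (m + 1 - (k₁ + s)) ^ 2 + (k₁ + s) ^ 2 + ((m + 1 - k₂) ^ 2 + k₂ ^ 2) =
      (m + 1 - k₁) ^ 2 + k₁ ^ 2 + ((m + 1 - k₂) ^ 2 + k₂ ^ 2) + m * (2 * k₁ - s - 1) := by
    rw [hms]
    ring
  simp only [hh, hμ, mul_exp_fresnel]
  rw [hQ, exp_pi_mul_div_add_mul _ _ _ hm0,
    show 2 * k₁ - s - 1 = (1 + s) - 2 * (1 + s - k₁) by ring, neg_one_zpow_mul_sub_two_mul]

theorem stmt18_general (m : ℕ) (hm : Even m) (f : ℤ)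
    (μ : ℤ → ℤ → ℂ)
    (hμ : ∀ a b : ℤ, μ a b =
      Complex.exp (Complex.I * Real.pi * f * ((a ^ 2 + b ^ 2 : ℤ) : ℂ) / m))
    (h : ℤ → ℤ → ℂ)
    (hh : ∀ k₁ k₂ : ℤ, h k₁ k₂ = μ (m + 1 - k₁) (m + 1 - k₂) * μ k₁ k₂)
    (σ : ℂ) (hσ : σ = (-1 : ℂ) ^ (f * (1 + (m : ℤ) / 2))) :
    (∀ k₁ k₂ : ℤ, 1 ≤ k₁ → k₁ + (m : ℤ) / 2 ≤ m → 1 ≤ k₂ → k₂ ≤ m →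
      h (k₁ + (m : ℤ) / 2) k₂ = σ * h k₁ k₂) ∧
    (∀ k₁ k₂ : ℤ, 1 ≤ k₁ → k₁ ≤ m → 1 ≤ k₂ → k₂ + (m : ℤ) / 2 ≤ m →
      h k₁ (k₂ + (m : ℤ) / 2) = σ * h k₁ k₂) := by
  subst hσ
  have hμ_swap : ∀ a b : ℤ, μ b a =
      exp (I * Real.pi * f * ((a ^ 2 + b ^ 2 : ℤ) : ℂ) / m) := fun a b => by
    rw [hμ, add_comm (b ^ 2)]
  constructor
  · intro k₁ k₂ _ _ hk₂ hk₂m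
    exact fresnel_twin_product_shift_fst m hm (by omega) f μ hμ h hh k₁ k₂
  · intro k₁ k₂ hk₁ hk₁m _ _
    exact fresnel_twin_product_shift_fst m hm (by omega) f (fun a b => μ b a) hμ_swap
      (fun k₁ k₂ => h k₂ k₁) (fun k₁ k₂ => hh k₂ k₁) k₂ k₁

theorem stmt18 (m : ℕ) (hm : Even m) (hm0 : 0 < m) (f : ℤ)
    (μ : ℤ → ℤ → ℂ)
    (hμ : ∀ a b : ℤ, μ a b =
      Complex.exp (Complex.I * Real.pi * f * ((a ^ 2 + b ^ 2 : ℤ) : ℂ) / m))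
    (h : ℤ → ℤ → ℂ)
    (hh : ∀ k₁ k₂ : ℤ, h k₁ k₂ = μ (m + 1 - k₁) (m + 1 - k₂) * μ k₁ k₂)
    (σ : ℂ) (hσ : σ = (-1 : ℂ) ^ (f * (1 + (m : ℤ) / 2))) :
    (∀ k₁ k₂ : ℤ, 1 ≤ k₁ → k₁ + (m : ℤ) / 2 ≤ m → 1 ≤ k₂ → k₂ ≤ m →
      h (k₁ + (m : ℤ) / 2) k₂ = σ * h k₁ k₂) ∧
    (∀ k₁ k₂ : ℤ, 1 ≤ k₁ → k₁ ≤ m → 1 ≤ k₂ → k₂ + (m : ℤ) / 2 ≤ m →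
      h k₁ (k₂ + (m : ℤ) / 2) = σ * h k₁ k₂) :=
  stmt18_general m hm f μ hμ h hh σ hσ
end
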